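/- Let p : ℝ → ℝ² be differentiable at 0 with ‖p(t)‖ > 1 for all t. Define s(t) = √(‖p(t)‖² − 1) and q(t) = ‖p(t)‖⁻² · (p(t) − s(t)·J(p(t))), which is the point where the tangent line from p(t) touches the unit circle centred at the origin (chosen so that a counterclockwise circular arc followed by the straight segment from q(t) to p(t) is a C¹ path). Let θ : ℝ → ℝ be differentiable at 0 and satisfy (cos θ(t), sin θ(t)) = q(t) for all t. Then the derivative at 0 of the function t ↦ θ(t) + s(t) equals ⟨v, x̂⟩, the inner product of the velocity v = p'(0) with the unit vector x̂ = (p(0) − q(0))/‖p(0) − q(0)‖ from the tangency point to the moving point. -/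

import Mathlib

open scoped RealInnerProductSpace

noncomputable section

/-- Rotation by π/2 in the plane: `J (x, y) = (-y, x)`. -/
def J (v : EuclideanSpace ℝ (Fin 2)) : EuclideanSpace ℝ (Fin 2) := !₂[-(v 1), v 0]

/-! The tangency point `q` is a unit vector with `p = q + s • J q`, so `s = ⟪p, J q⟫` and the
unit vector from `q` to `p` is `J q`. Writing `q = (cos θ, sin θ)` gives `q' = θ' • J q`, hence
`s' = ⟪p', J q⟫ + θ' ⟪p, J (J q)⟫ = ⟪p', J q⟫ - θ'` because `⟪p, q⟫ = 1`. -/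

local notation "ℝ²" => EuclideanSpace ℝ (Fin 2)

@[simp] lemma J_apply_zero (v : ℝ²) : J v 0 = -(v 1) := rfl
@[simp] lemma J_apply_one (v : ℝ²) : J v 1 = v 0 := rfl

lemma J_add (v w : ℝ²) : J (v + w) = J v + J w := by
  ext i; fin_cases i <;> simp [add_comm]

lemma J_sub (v w : ℝ²) : J (v - w) = J v - J w := by
  ext i; fin_cases i <;> simp [neg_add_eq_sub]

lemma J_smul (c : ℝ) (v : ℝ²) : J (c • v) = c • J v := by
  ext i; fin_cases i <;> simp

lemma J_J (v : ℝ²) : J (J v) = -v := by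
  ext i; fin_cases i <;> simp

lemma inner_J_self (v : ℝ²) : ⟪J v, v⟫ = 0 := by
  simp only [PiLp.inner_apply, RCLike.inner_apply, Real.ringHom_apply, Fin.sum_univ_two,
    J_apply_zero, J_apply_one]
  ring

lemma inner_J_J (v w : ℝ²) : ⟪J v, J w⟫ = ⟪v, w⟫ := by
  simp only [PiLp.inner_apply, RCLike.inner_apply, Real.ringHom_apply, Fin.sum_univ_two,
    J_apply_zero, J_apply_one]
  ring

def Jₗ : ℝ² →L[ℝ] ℝ² :=
  LinearMap.toContinuousLinearMap { toFun := J, map_add' := J_add, map_smul' := J_smul }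

lemma HasDerivAt.J {f : ℝ → ℝ²} {f' : ℝ²} {x : ℝ} (h : HasDerivAt f f' x) :
    HasDerivAt (fun t => J (f t)) (J f') x :=
  Jₗ.hasFDerivAt.comp_hasDerivAt x h

def circlePoint (φ : ℝ) : ℝ² := !₂[Real.cos φ, Real.sin φ]

lemma inner_circlePoint_self (φ : ℝ) : ⟪circlePoint φ, circlePoint φ⟫ = 1 := by
  simp only [circlePoint, PiLp.inner_apply, Fin.sum_univ_two]
  simp [Real.cos_sq_add_sin_sq]

lemma hasDerivAt_circlePoint (φ : ℝ) : HasDerivAt circlePoint (J (circlePoint φ)) φ := by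
  have h : HasDerivAt (fun φ => ![Real.cos φ, Real.sin φ]) ![-Real.sin φ, Real.cos φ] φ :=
    hasDerivAt_pi.2 (Fin.forall_fin_two.2 ⟨Real.hasDerivAt_cos φ, Real.hasDerivAt_sin φ⟩)
  exact (PiLp.hasFDerivAt_toLp 2 _).comp_hasDerivAt φ h

lemma eq_add_smul_J_of_tangency {v q : ℝ²} (hv : v ≠ 0) {s : ℝ} (hs : s ^ 2 = ‖v‖ ^ 2 - 1)
    (hq : q = (‖v‖ ^ 2)⁻¹ • (v - s • J v)) : v = q + s • J q := by
  have hn : (‖v‖ ^ 2)⁻¹ * ‖v‖ ^ 2 = 1 := inv_mul_cancel₀ (by positivity)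
  have hJq : J q = (‖v‖ ^ 2)⁻¹ • (J v + s • v) := by
    rw [hq, J_smul, J_sub, J_smul, J_J]
    module
  rw [hJq, hq]
  linear_combination (norm := module) (-(‖v‖ ^ 2)⁻¹ * hs) • v - hn • v

lemma inner_add_smul_J_J {e : ℝ²} (he : ⟪e, e⟫ = 1) (s : ℝ) : ⟪e + s • J e, J e⟫ = s := by
  rw [inner_add_left, inner_smul_left, real_inner_comm, inner_J_self, inner_J_J, he]
  simp

lemma inner_add_smul_J_self {e : ℝ²} (he : ⟪e, e⟫ = 1) (s : ℝ) : ⟪e + s • J e, e⟫ = 1 := by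
  rw [inner_add_left, inner_smul_left, inner_J_self, he]
  simp

/-- **Proposition 4.1: first variation of an arc–segment path.**  Let `p t` be a moving
point outside the closed unit disk, `s t = √(‖p t‖² − 1)` the tangent length, and
`q t = ‖p t‖⁻² • (p t − s t • J (p t))` the tangency point on the unit circle, with a
differentiable angle coordinate `θ t` of `q t`.  Then the derivative at `0` of the
length `θ t + s t` of the concatenated arc–segment path is `⟪v, x̂⟫`, where `v = p' 0`
and `x̂` is the unit vector from `q 0` to `p 0`. -/
theorem first_variation_arc_segment
    (p : ℝ → EuclideanSpace ℝ (Fin 2))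
    (hp : DifferentiableAt ℝ p 0) (hout : ∀ t, 1 < ‖p t‖)
    (q : ℝ → EuclideanSpace ℝ (Fin 2))
    (hq : ∀ t, q t = (‖p t‖ ^ 2)⁻¹ • (p t - Real.sqrt (‖p t‖ ^ 2 - 1) • J (p t)))
    (θ : ℝ → ℝ) (hθ : DifferentiableAt ℝ θ 0)
    (hangle : ∀ t, (!₂[Real.cos (θ t), Real.sin (θ t)] : EuclideanSpace ℝ (Fin 2)) = q t) :
    deriv (fun t => θ t + Real.sqrt (‖p t‖ ^ 2 - 1)) 0
      = ⟪deriv p 0, ‖p 0 - q 0‖⁻¹ • (p 0 - q 0)⟫ := by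
  set s : ℝ → ℝ := fun t => Real.sqrt (‖p t‖ ^ 2 - 1)
  have hs_pos (t : ℝ) : 0 < s t := Real.sqrt_pos.2 (by nlinarith [hout t])
  have hdecomp (t : ℝ) : p t = q t + s t • J (q t) :=
    eq_add_smul_J_of_tangency (norm_pos_iff.1 (one_pos.trans (hout t)))
      (Real.sq_sqrt (by nlinarith [hout t])) (hq t)
  have hunit (t : ℝ) : ⟪q t, q t⟫ = 1 := hangle t ▸ inner_circlePoint_self (θ t)
  have hs_eq : s = fun t => ⟪p t, J (q t)⟫ := by
    funext t; rw [hdecomp t, inner_add_smul_J_J (hunit t)]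
  have hq' : HasDerivAt q (deriv θ 0 • J (q 0)) 0 := by
    rw [← funext hangle]
    exact (hasDerivAt_circlePoint (θ 0)).scomp 0 hθ.hasDerivAt
  have hs' : HasDerivAt s (⟪deriv p 0, J (q 0)⟫ - deriv θ 0) 0 := by
    have hpq : ⟪p 0, q 0⟫ = 1 := by
      rw [hdecomp 0]; exact inner_add_smul_J_self (hunit 0) _
    rw [hs_eq]
    refine (hp.hasDerivAt.inner ℝ hq'.J).congr_deriv ?_
    rw [J_smul, J_J, inner_smul_right, inner_neg_right, hpq]
    ring
  have hdir : ‖p 0 - q 0‖⁻¹ • (p 0 - q 0) = J (q 0) := by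
    have hJ : ‖J (q 0)‖ = 1 := by
      rw [norm_eq_sqrt_real_inner, inner_J_J, hunit, Real.sqrt_one]
    rw [hdecomp 0, add_sub_cancel_left, norm_smul, hJ, mul_one, Real.norm_of_nonneg (hs_pos 0).le,
      smul_smul, inv_mul_cancel₀ (hs_pos 0).ne', one_smul]
  rw [hdir]
  exact (hθ.hasDerivAt.add hs').deriv.trans (add_sub_cancel _ _)

end
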